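/- In ℝ^5, the diagonal conv{0,(1,1,1,1,1)} of the hypercube [0,1]^5 and the tetrahedron with vertices (0,0,0,1,1), (0,0,1,0,1), (0,1,1,1,0), (1,1,0,0,0) are disjoint and their Euclidean distance equals 1/√58. -/

import Mathlib

/-! The hyperplane with normal `n = (-4, 5, -2, -2, 3)` separates the two sets: `⟪n, ·⟫`
vanishes at both ends of the diagonal and equals `1` at every vertex of the tetrahedron. Hence
any two points of the sets are at distance at least `1 / ‖n‖ = 1 / √58`, and this bound is
attained by the diagonal point `(25/58) • (1,1,1,1,1)` and its translate by `n / ‖n‖² = n / 58`,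
which lies in the tetrahedron. -/

/-- Points of ℝ^5 as elements of Euclidean space. -/
noncomputable def pt5 (x y z w u : ℝ) : EuclideanSpace ℝ (Fin 5) := WithLp.toLp 2 ![x, y, z, w, u]

open Set

section InnerProductSpace

variable {E : Type*} [NormedAddCommGroup E] [InnerProductSpace ℝ E]

lemma inner_eq_of_mem_convexHull {a x : E} {s : Set E} {c : ℝ}
    (hs : ∀ y ∈ s, inner ℝ a y = c) (hx : x ∈ convexHull ℝ s) : inner ℝ a x = c :=
  convexHull_min hs (convex_hyperplane (innerₛₗ ℝ a).isLinear c) hx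

lemma isLeast_image2_dist_of_le_inner_sub {a p : E} {P Q : Set E} {δ : ℝ} (hδ : 0 ≤ δ)
    (hPQ : ∀ x ∈ P, ∀ y ∈ Q, δ ≤ inner ℝ a (y - x)) (hp : p ∈ P)
    (hq : p + (δ / ‖a‖ ^ 2) • a ∈ Q) : IsLeast (image2 dist P Q) (δ / ‖a‖) := by
  refine ⟨⟨p, hp, _, hq, ?_⟩, ?_⟩
  · rcases eq_or_ne a 0 with rfl | ha
    · simp
    have ha' : ‖a‖ ≠ 0 := norm_ne_zero_iff.2 ha
    rw [dist_self_add_right, norm_smul, Real.norm_of_nonneg (by positivity)]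
    field_simp
  · rintro _ ⟨x, hx, y, hy, rfl⟩
    refine div_le_of_le_mul₀ (norm_nonneg _) dist_nonneg ?_
    calc δ ≤ inner ℝ a (y - x) := hPQ x hx y hy
      _ ≤ ‖a‖ * ‖y - x‖ := real_inner_le_norm a (y - x)
      _ = dist x y * ‖a‖ := by rw [dist_eq_norm', mul_comm]

end InnerProductSpace

lemma inter_eq_empty_of_mem_lowerBounds_image2_dist {α : Type*} [PseudoMetricSpace α]
    {P Q : Set α} {d : ℝ} (hd : 0 < d) (h : d ∈ lowerBounds (image2 dist P Q)) :
    P ∩ Q = ∅ :=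
  eq_empty_of_forall_notMem fun x hx =>
    (h ⟨x, hx.1, x, hx.2, dist_self x⟩).not_gt hd

lemma pt5_add (x y z w u x' y' z' w' u' : ℝ) :
    pt5 x y z w u + pt5 x' y' z' w' u' = pt5 (x + x') (y + y') (z + z') (w + w') (u + u') := by
  ext i; fin_cases i <;> simp [pt5]

lemma smul_pt5 (c x y z w u : ℝ) :
    c • pt5 x y z w u = pt5 (c * x) (c * y) (c * z) (c * w) (c * u) := by
  ext i; fin_cases i <;> simp [pt5]

lemma inner_pt5 (x y z w u x' y' z' w' u' : ℝ) :
    inner ℝ (pt5 x y z w u) (pt5 x' y' z' w' u') =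
      x * x' + y * y' + z * z' + w * w' + u * u' := by
  simp only [pt5, PiLp.inner_apply, RCLike.inner_apply, Real.ringHom_apply, Fin.sum_univ_five,
    Matrix.cons_val]
  ring

lemma norm_pt5 (x y z w u : ℝ) :
    ‖pt5 x y z w u‖ = √(x ^ 2 + y ^ 2 + z ^ 2 + w ^ 2 + u ^ 2) := by
  rw [norm_eq_sqrt_real_inner, inner_pt5]; ring_nf

lemma pt5_mem_tetrahedron :
    pt5 (21/58) (30/58) (23/58) (23/58) (28/58) ∈
      convexHull ℝ {pt5 0 0 0 1 1, pt5 0 0 1 0 1, pt5 0 1 1 1 0, pt5 1 1 0 0 0} := by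
  convert (convex_convexHull ℝ _).sum_mem (t := Finset.univ) (w := ![14/58, 14/58, 9/58, 21/58])
    (z := ![pt5 0 0 0 1 1, pt5 0 0 1 0 1, pt5 0 1 1 1 0, pt5 1 1 0 0 0])
    (fun i _ => by fin_cases i <;> norm_num)
    (by norm_num [Fin.sum_univ_four, Matrix.cons_val_two, Matrix.cons_val_three])
    (fun i _ => ?_) using 1
  · norm_num [Fin.sum_univ_four, Matrix.cons_val_two, Matrix.cons_val_three, smul_pt5, pt5_add]
  · fin_cases i <;> apply subset_convexHull <;> simp

/-- In ℝ^5, the diagonal conv{0,(1,1,1,1,1)} of the hypercube [0,1]^5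
and the tetrahedron with vertices (0,0,0,1,1), (0,0,1,0,1), (0,1,1,1,0), (1,1,0,0,0)
are disjoint and their Euclidean distance equals 1/√58. -/
theorem stmt_17 :
    let P := segment ℝ (pt5 0 0 0 0 0) (pt5 1 1 1 1 1)
    let Q := convexHull ℝ {pt5 0 0 0 1 1, pt5 0 0 1 0 1, pt5 0 1 1 1 0, pt5 1 1 0 0 0}
    P ∩ Q = ∅ ∧ sInf (Set.image2 dist P Q) = 1 / Real.sqrt 58 := by
  intro P Q
  set n := pt5 (-4) 5 (-2) (-2) 3
  have hn : ‖n‖ = √58 := by rw [norm_pt5]; norm_num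
  have hP : ∀ x ∈ P, inner ℝ n x = 0 := fun x hx =>
    inner_eq_of_mem_convexHull (s := {pt5 0 0 0 0 0, pt5 1 1 1 1 1}) (by norm_num [n, inner_pt5])
      (by rwa [convexHull_pair])
  have hQ : ∀ y ∈ Q, inner ℝ n y = 1 :=
    fun y => inner_eq_of_mem_convexHull (by norm_num [n, inner_pt5])
  have hmin : IsLeast (image2 dist P Q) (1 / √58) := by
    rw [← hn]
    refine isLeast_image2_dist_of_le_inner_sub zero_le_one
      (fun x hx y hy => by rw [inner_sub_right, hP x hx, hQ y hy]; norm_num)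
      (p := pt5 (25/58) (25/58) (25/58) (25/58) (25/58))
      ⟨33/58, 25/58, by norm_num, by norm_num, by norm_num, by norm_num [smul_pt5, pt5_add]⟩ ?_
    rw [hn, Real.sq_sqrt (by norm_num)]
    convert pt5_mem_tetrahedron using 1
    norm_num [n, smul_pt5, pt5_add]
  exact ⟨inter_eq_empty_of_mem_lowerBounds_image2_dist (by positivity) hmin.2, hmin.csInf_eq⟩
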